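/- Let X be a finite set with |X| ≥ 2 and let C be a hierarchy on X. Then the following are equivalent: (a) C is a maximal hierarchy on X; (b) X ∈ C and every cluster C ∈ C with |C| > 1 is the union of two proper sub-clusters C₁, C₂ ∈ C (which are then necessarily disjoint); (c) X ∈ C, C is ample, and {x} ∈ C for every x ∈ X. -/

import Mathlib

/-!
A hierarchy `C` is maximal exactly when every non-empty set compatible with all of its
members already belongs to it. For (a) → (c), `X`, the singletons and the difference
`C₁ - C₂` along a Hasse arc are compatible with every cluster: a cluster meeting `C₁ - C₂`
without being nested with it would lie strictly between `C₂` and `C₁`. For (c) → (b), a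
cluster `A` with `|A| > 1` properly contains a singleton, hence has a maximal proper
sub-cluster `C₂`, and ampleness gives the split `A = C₂ ∪ (A - C₂)`. For (b) → (a), a set
compatible with all clusters is trapped, by descending through the splits starting from
`X`, in a cluster it must equal.
-/

/-- Two subsets `A`, `B` are compatible if `A ∩ B ∈ {∅, A, B}`. -/
def Compatible {α : Type*} [DecidableEq α] (A B : Finset α) : Prop :=
  A ∩ B = ∅ ∨ A ∩ B = A ∨ A ∩ B = B

/-- A cluster system: a collection of non-empty subsets of `X`. -/
def IsCS {α : Type*} [DecidableEq α] (C : Set (Finset α)) : Prop :=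
  ∀ A ∈ C, A.Nonempty

/-- The adjoint `C*`: all non-empty subsets of `X` compatible with every member of `C`. -/
def adjS {α : Type*} [DecidableEq α] (C : Set (Finset α)) : Set (Finset α) :=
  {A | A.Nonempty ∧ ∀ B ∈ C, Compatible A B}

/-- A hierarchy: a cluster system whose members are pairwise compatible. -/
def IsHierarchyS {α : Type*} [DecidableEq α] (C : Set (Finset α)) : Prop :=
  IsCS C ∧ ∀ A ∈ C, ∀ B ∈ C, Compatible A B

/-- A maximal hierarchy: a hierarchy not properly contained in any other hierarchy. -/
def IsMaxHierarchyS {α : Type*} [DecidableEq α] (H : Set (Finset α)) : Prop :=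
  IsHierarchyS H ∧ ∀ D : Set (Finset α), IsHierarchyS D → H ⊆ D → D = H

/-- A weak patchwork: incompatible members have their union in the system. -/
def IsWeakPW {α : Type*} [DecidableEq α] (C : Set (Finset α)) : Prop :=
  ∀ A ∈ C, ∀ B ∈ C, ¬Compatible A B → A ∪ B ∈ C

/-- A patchwork: incompatible members have both intersection and union in the system. -/
def IsPW {α : Type*} [DecidableEq α] (C : Set (Finset α)) : Prop :=
  ∀ A ∈ C, ∀ B ∈ C, ¬Compatible A B → A ∩ B ∈ C ∧ A ∪ B ∈ C

/-- A saturated patchwork: for incompatible members `A`, `B`, the five sets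
`A ∩ B`, `A ∪ B`, `A - B`, `B - A`, `(A ∪ B) - (A ∩ B)` lie in the system. -/
def IsSatPW {α : Type*} [DecidableEq α] (C : Set (Finset α)) : Prop :=
  ∀ A ∈ C, ∀ B ∈ C, ¬Compatible A B →
    A ∩ B ∈ C ∧ A ∪ B ∈ C ∧ A \ B ∈ C ∧ B \ A ∈ C ∧ (A ∪ B) \ (A ∩ B) ∈ C

/-- The trivial cluster system: all singletons together with `X` itself. -/
def CtrivS (α : Type*) [Fintype α] [DecidableEq α] : Set (Finset α) :=
  {A | (∃ x : α, A = {x}) ∨ A = Finset.univ}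

/-- `C` is ample: for every arc `(C₂, C₁)` of the Hasse diagram (i.e. `C₂ ⊊ C₁`
with nothing of `C` strictly between), `C₁ - C₂ ∈ C`. -/
def IsAmpleS {α : Type*} [DecidableEq α] (C : Set (Finset α)) : Prop :=
  ∀ C₁ ∈ C, ∀ C₂ ∈ C, C₂ ⊂ C₁ → (∀ B ∈ C, ¬(C₂ ⊂ B ∧ B ⊂ C₁)) → C₁ \ C₂ ∈ C

section Hierarchy

variable {α : Type*}

theorem exists_hasse_arc_of_ssubset {C : Set (Finset α)} {A B : Finset α}
    (hB : B ∈ C) (hBA : B ⊂ A) :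
    ∃ C₂ ∈ C, C₂ ⊂ A ∧ ∀ D ∈ C, ¬(C₂ ⊂ D ∧ D ⊂ A) := by
  have hfin : {D | D ∈ C ∧ D ⊂ A}.Finite :=
    A.powerset.finite_toSet.subset fun D hD => Finset.mem_powerset.2 hD.2.subset
  obtain ⟨C₂, ⟨hC₂, hC₂A⟩, hmax⟩ := hfin.exists_maximal ⟨B, hB, hBA⟩
  exact ⟨C₂, hC₂, hC₂A, fun D hD ⟨hlt, hDA⟩ => hlt.not_ge (hmax ⟨hD, hDA⟩ hlt.le)⟩

variable [DecidableEq α]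

theorem compatible_iff {A B : Finset α} :
    Compatible A B ↔ Disjoint A B ∨ A ⊆ B ∨ B ⊆ A := by
  rw [Compatible, ← Finset.disjoint_iff_inter_eq_empty, Finset.inter_eq_left,
    Finset.inter_eq_right]

theorem Compatible.symm {A B : Finset α} (h : Compatible A B) : Compatible B A := by
  rw [compatible_iff] at h ⊢
  rcases h with h | h | h
  exacts [Or.inl h.symm, Or.inr (Or.inr h), Or.inr (Or.inl h)]

theorem Compatible.subset_or_subset_or_union_subset {A C₁ C₂ : Finset α}
    (hA : A ⊆ C₁ ∪ C₂) (h₁ : Compatible A C₁) (h₂ : Compatible A C₂) :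
    A ⊆ C₁ ∨ A ⊆ C₂ ∨ C₁ ∪ C₂ ⊆ A := by
  rw [compatible_iff] at h₁ h₂
  rcases h₁ with h₁ | h₁ | h₁
  · exact Or.inr (Or.inl fun x hx => ((Finset.mem_union.1 (hA hx)).resolve_left
      (Finset.disjoint_left.1 h₁ hx)))
  · exact Or.inl h₁
  rcases h₂ with h₂ | h₂ | h₂
  · exact Or.inl fun x hx => ((Finset.mem_union.1 (hA hx)).resolve_right
      (Finset.disjoint_left.1 h₂ hx))
  · exact Or.inr (Or.inl h₂)
  · exact Or.inr (Or.inr (Finset.union_subset h₁ h₂))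

theorem IsHierarchyS.insert {C : Set (Finset α)} (hC : IsHierarchyS C) {A : Finset α}
    (hA : A ∈ adjS C) : IsHierarchyS (insert A C) := by
  refine ⟨?_, ?_⟩
  · rintro B (rfl | hB)
    exacts [hA.1, hC.1 B hB]
  · rintro P (rfl | hP) Q (rfl | hQ)
    · exact Or.inr (Or.inl (Finset.inter_self _))
    · exact hA.2 Q hQ
    · exact (hA.2 P hP).symm
    · exact hC.2 P hP Q hQ

theorem isMaxHierarchyS_iff_adjS_subset {C : Set (Finset α)} (hC : IsHierarchyS C) :
    IsMaxHierarchyS C ↔ adjS C ⊆ C := by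
  refine ⟨fun hmax A hA => ?_, fun hadj => ⟨hC, fun D hD hCD => ?_⟩⟩
  · rw [← hmax.2 _ (hC.insert hA) (Set.subset_insert A C)]
    exact Set.mem_insert A C
  · refine Set.Subset.antisymm (fun A hA => hadj ⟨hD.1 A hA, fun B hB => ?_⟩) hCD
    exact hD.2 A hA B (hCD hB)

theorem univ_mem_adjS [Fintype α] [Nonempty α] (C : Set (Finset α)) :
    (Finset.univ : Finset α) ∈ adjS C :=
  ⟨Finset.univ_nonempty, fun B _ => Or.inr (Or.inr (Finset.univ_inter B))⟩

theorem singleton_mem_adjS (C : Set (Finset α)) (x : α) : ({x} : Finset α) ∈ adjS C := by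
  refine ⟨Finset.singleton_nonempty x, fun B _ => ?_⟩
  by_cases hx : x ∈ B
  · exact Or.inr (Or.inl (Finset.singleton_inter_of_mem hx))
  · exact Or.inl (Finset.singleton_inter_of_notMem hx)

theorem sdiff_mem_adjS_of_hasse_arc {C : Set (Finset α)} (hC : IsHierarchyS C)
    {C₁ C₂ : Finset α} (hC₁ : C₁ ∈ C) (hC₂ : C₂ ∈ C) (hlt : C₂ ⊂ C₁)
    (harc : ∀ B ∈ C, ¬(C₂ ⊂ B ∧ B ⊂ C₁)) : C₁ \ C₂ ∈ adjS C := by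
  refine ⟨Finset.sdiff_nonempty.2 (not_subset_of_ssubset hlt), fun B hB => ?_⟩
  rw [compatible_iff]
  rcases compatible_iff.1 (hC.2 B hB C₁ hC₁) with h₁ | h₁ | h₁
  · exact Or.inl (h₁.symm.mono_left Finset.sdiff_subset)
  · rcases compatible_iff.1 (hC.2 B hB C₂ hC₂) with h₂ | h₂ | h₂
    · exact Or.inr (Or.inr (Finset.subset_sdiff.2 ⟨h₁, h₂⟩))
    · exact Or.inl (Finset.sdiff_disjoint.mono_right h₂)
    · rcases h₂.eq_or_ssubset with rfl | h₂
      · exact Or.inl Finset.sdiff_disjoint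
      rcases h₁.eq_or_ssubset with rfl | h₁
      · exact Or.inr (Or.inl Finset.sdiff_subset)
      · exact absurd ⟨h₂, h₁⟩ (harc B hB)
  · exact Or.inr (Or.inl (Finset.sdiff_subset.trans h₁))

theorem IsMaxHierarchyS.isAmpleS {C : Set (Finset α)} (hmax : IsMaxHierarchyS C) :
    IsAmpleS C := fun _ hC₁ _ hC₂ hlt harc =>
  (isMaxHierarchyS_iff_adjS_subset hmax.1).1 hmax
    (sdiff_mem_adjS_of_hasse_arc hmax.1 hC₁ hC₂ hlt harc)

theorem IsAmpleS.exists_split {C : Set (Finset α)} (hC : IsCS C) (hample : IsAmpleS C)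
    (hsing : ∀ x : α, ({x} : Finset α) ∈ C) {A : Finset α} (hA : A ∈ C) (hcard : 1 < A.card) :
    ∃ C₁ ∈ C, ∃ C₂ ∈ C, C₁ ⊂ A ∧ C₂ ⊂ A ∧ A = C₁ ∪ C₂ := by
  obtain ⟨x, hx⟩ := hC A hA
  have hxA : {x} ⊂ A := Finset.ssubset_iff_subset_ne.2
    ⟨Finset.singleton_subset_iff.2 hx, fun h => by simp [← h] at hcard⟩
  obtain ⟨C₂, hC₂, hC₂A, harc⟩ := exists_hasse_arc_of_ssubset (hsing x) hxA
  exact ⟨C₂, hC₂, A \ C₂, hample A hA C₂ hC₂ hC₂A harc, hC₂A,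
    Finset.sdiff_ssubset hC₂A.subset (hC C₂ hC₂),
    (Finset.union_sdiff_of_subset hC₂A.subset).symm⟩

theorem mem_of_mem_adjS_of_subset {C : Set (Finset α)}
    (hsplit : ∀ A ∈ C, 1 < A.card → ∃ C₁ ∈ C, ∃ C₂ ∈ C, C₁ ⊂ A ∧ C₂ ⊂ A ∧ A = C₁ ∪ C₂)
    {A : Finset α} (hA : A ∈ adjS C) {B : Finset α} (hB : B ∈ C) (hAB : A ⊆ B) : A ∈ C := by
  induction B using Finset.strongInduction with
  | H B ih =>
    by_cases hcard : B.card ≤ 1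
    · rwa [Finset.eq_of_subset_of_card_le hAB (hcard.trans (Finset.card_pos.2 hA.1))]
    obtain ⟨C₁, hC₁, C₂, hC₂, hC₁B, hC₂B, rfl⟩ := hsplit B hB (by omega)
    rcases (hA.2 C₁ hC₁).subset_or_subset_or_union_subset hAB (hA.2 C₂ hC₂) with h | h | h
    · exact ih C₁ hC₁B hC₁ h
    · exact ih C₂ hC₂B hC₂ h
    · rwa [hAB.antisymm h]

end Hierarchy

/-- For a hierarchy `C` on `X` the following are equivalent: (a) `C` is a maximal
hierarchy; (b) `X ∈ C` and every member of cardinality `> 1` is the union of two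
proper sub-clusters in `C`; (c) `X ∈ C`, `C` is ample, and `{x} ∈ C` for all `x`. -/
theorem stmt3 {α : Type*} [Fintype α] [DecidableEq α] (hcard : 2 ≤ Fintype.card α)
    (C : Set (Finset α)) (hC : IsHierarchyS C) :
    [IsMaxHierarchyS C,
     Finset.univ ∈ C ∧ ∀ A ∈ C, 1 < A.card →
        ∃ C₁ ∈ C, ∃ C₂ ∈ C, C₁ ⊂ A ∧ C₂ ⊂ A ∧ A = C₁ ∪ C₂,
     Finset.univ ∈ C ∧ IsAmpleS C ∧ ∀ x : α, ({x} : Finset α) ∈ C].TFAE := by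
  have : Nonempty α := Fintype.card_pos_iff.1 (by omega)
  tfae_have 1 → 3 := fun hmax =>
    have hadj := (isMaxHierarchyS_iff_adjS_subset hC).1 hmax
    ⟨hadj (univ_mem_adjS C), hmax.isAmpleS, fun x => hadj (singleton_mem_adjS C x)⟩
  tfae_have 3 → 2 := fun ⟨huniv, hample, hsing⟩ =>
    ⟨huniv, fun _ hA hA₁ => hample.exists_split hC.1 hsing hA hA₁⟩
  tfae_have 2 → 1 := fun ⟨huniv, hsplit⟩ =>
    (isMaxHierarchyS_iff_adjS_subset hC).2 fun A hA =>
      mem_of_mem_adjS_of_subset hsplit hA huniv (Finset.subset_univ A)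
  tfae_finish
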